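/- arXiv:2305.18268 — 4 statements merged into one kernel-verified Lean document; each statement's English description precedes it below -/
import Mathlib

section
/- If P is irreducible and reversible with respect to π, and all eigenvalues of P except λ_1 = 1 are non-positive, then P efficiency-dominates Π, the transition matrix of i.i.d. sampling from π defined by Π(x,y) = π(y). -/
open Matrix BigOperators Filter

def IsStochastic {n : ℕ} (P : Matrix (Fin n) (Fin n) ℝ) : Prop :=
  (∀ x y, 0 ≤ P x y) ∧ ∀ x, ∑ y, P x y = 1

def IsReversible {n : ℕ} (π : Fin n → ℝ) (P : Matrix (Fin n) (Fin n) ℝ) : Prop :=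
  ∀ x y, π x * P x y = π y * P y x

def MatIrreducible {n : ℕ} (P : Matrix (Fin n) (Fin n) ℝ) : Prop :=
  ∀ x y, ∃ k : ℕ, 0 < (P ^ k) x y

noncomputable def pInner {n : ℕ} (π f g : Fin n → ℝ) : ℝ := ∑ x, f x * g x * π x

noncomputable def autocov {n : ℕ} (π : Fin n → ℝ) (P : Matrix (Fin n) (Fin n) ℝ)
    (f : Fin n → ℝ) (k : ℕ) : ℝ :=
  ∑ x, ∑ y, π x * (f x - ∑ z, π z * f z) * (P ^ k) x y * (f y - ∑ z, π z * f z)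

noncomputable def varN {n : ℕ} (π : Fin n → ℝ) (P : Matrix (Fin n) (Fin n) ℝ)
    (f : Fin n → ℝ) (N : ℕ) : ℝ :=
  ((N : ℝ))⁻¹ * ∑ i ∈ Finset.range N, ∑ j ∈ Finset.range N,
    autocov π P f (max i j - min i j)

def HasAsymptVar {n : ℕ} (π : Fin n → ℝ) (P : Matrix (Fin n) (Fin n) ℝ)
    (f : Fin n → ℝ) (v : ℝ) : Prop :=
  Tendsto (varN π P f) atTop (nhds v)

def EffDom {n : ℕ} (π : Fin n → ℝ) (P Q : Matrix (Fin n) (Fin n) ℝ) : Prop :=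
  ∀ (f : Fin n → ℝ) (vP vQ : ℝ),
    HasAsymptVar π P f vP → HasAsymptVar π Q f vQ → vP ≤ vQ

/-!
Conjugating `P` by `diagonal √π` gives a symmetric matrix `S`, and with `φ = √π (f - E_π f)` the
lag-`k` autocovariance is `⟨φ, S ^ k φ⟩ = ∑ i, c i ^ 2 * λ i ^ k` in an orthonormal eigenbasis of
`S`. By irreducibility the eigenvectors of `S` for the eigenvalue `1` are multiples of `√π`, which
is orthogonal to `φ`, so only eigenvalues in `[-1, 0]` contribute, and for those
`∑ a, b < N, λ ^ |a - b| ≤ N`. Hence the finite-`N` variances of `P` never exceed the lag-`0`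
autocovariance, which is the asymptotic variance of i.i.d. sampling since its autocovariances vanish
at every positive lag.
-/

open Finset

section GeometricSums

variable {R : Type*} [Ring R] [LinearOrder R] [IsStrictOrderedRing R] {l : R}

lemma geom_sum_nonneg_of_neg_one_le (hl : -1 ≤ l) (N : ℕ) : 0 ≤ ∑ k ∈ range N, l ^ k := by
  rcases eq_or_ne N 0 with rfl | hN
  · simp
  · exact not_lt.1 fun h => ((geom_sum_neg_iff hN).1 h).2.not_ge (neg_le_iff_add_nonneg.1 hl)

lemma sum_range_pow_succ_nonpos (hl₁ : -1 ≤ l) (hl₂ : l ≤ 0) (N : ℕ) :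
    ∑ k ∈ range N, l ^ (k + 1) ≤ 0 := by
  simp_rw [pow_succ', ← mul_sum]
  exact mul_nonpos_of_nonpos_of_nonneg hl₂ (geom_sum_nonneg_of_neg_one_le hl₁ N)

lemma sum_range_sum_range_pow_dist_le {l : ℝ} (hl₁ : -1 ≤ l) (hl₂ : l ≤ 0) (N : ℕ) :
    ∑ a ∈ range N, ∑ b ∈ range N, l ^ (max a b - min a b) ≤ N := by
  induction N with
  | zero => simp
  | succ N ih =>
    have hcol : ∑ a ∈ range N, l ^ (max a N - min a N) = ∑ k ∈ range N, l ^ (k + 1) := by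
      rw [← sum_range_reflect]
      refine sum_congr rfl fun a ha => ?_
      have := mem_range.1 ha
      congr 1
      omega
    have hrow : ∑ b ∈ range N, l ^ (max N b - min N b) = ∑ k ∈ range N, l ^ (k + 1) := by
      rw [← hcol]
      simp only [max_comm N, min_comm N]
    simp only [sum_range_succ, sum_add_distrib, hcol, hrow, max_self, min_self, Nat.sub_self,
      pow_zero]
    push_cast
    linarith [sum_range_pow_succ_nonpos hl₁ hl₂ N]

end GeometricSums

section RowStochastic

variable {ι : Type*} [Fintype ι] [DecidableEq ι] {M : Matrix ι ι ℝ}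

lemma abs_le_one_of_mulVec_eq_smul (hM : M ∈ rowStochastic ℝ ι) {μ : ℝ} {v : ι → ℝ}
    (hv : v ≠ 0) (hMv : M *ᵥ v = μ • v) : |μ| ≤ 1 := by
  obtain ⟨y, hy⟩ := Function.ne_iff.1 hv
  obtain ⟨x, -, hx⟩ := exists_max_image univ (fun z => |v z|) ⟨y, mem_univ y⟩
  have hvx : 0 < |v x| := (abs_pos.2 hy).trans_le (hx y (mem_univ y))
  refine le_of_mul_le_mul_right ?_ hvx
  calc |μ| * |v x| = |∑ y, M x y * v y| := by
        rw [← abs_mul, ← smul_eq_mul, ← Pi.smul_apply, ← hMv]; rfl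
    _ ≤ ∑ y, M x y * |v x| := by
        refine (abs_sum_le_sum_abs _ _).trans (sum_le_sum fun y _ => ?_)
        rw [abs_mul, abs_of_nonneg (nonneg_of_mem_rowStochastic hM)]
        exact mul_le_mul_of_nonneg_left (hx y (mem_univ y)) (nonneg_of_mem_rowStochastic hM)
    _ = 1 * |v x| := by rw [← sum_mul, sum_row_of_mem_rowStochastic hM]

lemma eq_of_mulVec_eq_self_of_isMax (hM : M ∈ rowStochastic ℝ ι) {v : ι → ℝ}
    (hMv : M *ᵥ v = v) {z w : ι} (hz : ∀ y, v y ≤ v z) (hzw : 0 < M z w) : v w = v z := by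
  have hsum : ∑ y, M z y * (v z - v y) = 0 := by
    simp only [mul_sub, sum_sub_distrib, ← sum_mul, sum_row_of_mem_rowStochastic hM, one_mul]
    exact sub_eq_zero.2 (congrFun hMv z).symm
  have hterm := (sum_eq_zero_iff_of_nonneg fun y _ =>
    mul_nonneg (nonneg_of_mem_rowStochastic hM) (sub_nonneg.2 (hz y))).1 hsum w (mem_univ w)
  linarith [(mul_eq_zero.1 hterm).resolve_left hzw.ne']

lemma pow_mulVec_eq_self {v : ι → ℝ} (hMv : M *ᵥ v = v) (k : ℕ) : (M ^ k) *ᵥ v = v := by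
  induction k with
  | zero => rw [pow_zero, one_mulVec]
  | succ k ih => rw [pow_succ, ← mulVec_mulVec, hMv, ih]

lemma eq_of_mulVec_eq_self (hM : M ∈ rowStochastic ℝ ι) (hirr : ∀ x y, ∃ k : ℕ, 0 < (M ^ k) x y)
    {v : ι → ℝ} (hMv : M *ᵥ v = v) (x y : ι) : v x = v y := by
  obtain ⟨z, -, hz⟩ := exists_max_image univ v ⟨x, mem_univ x⟩
  have hmax (w : ι) : v w = v z := by
    obtain ⟨k, hk⟩ := hirr z w
    exact eq_of_mulVec_eq_self_of_isMax (pow_mem hM k) (pow_mulVec_eq_self hMv k)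
      (fun y => hz y (mem_univ y)) hk
  rw [hmax x, hmax y]

end RowStochastic

section Spectral

variable {ι κ : Type*} [Fintype ι] [Fintype κ]

lemma OrthonormalBasis.dotProduct_eq_sum (b : OrthonormalBasis κ ℝ (EuclideanSpace ℝ ι))
    (v w : ι → ℝ) : v ⬝ᵥ w = ∑ i, (⇑(b i) ⬝ᵥ v) * (⇑(b i) ⬝ᵥ w) := by
  have := b.sum_inner_mul_inner (WithLp.toLp 2 v) (WithLp.toLp 2 w)
  simp only [EuclideanSpace.inner_eq_star_dotProduct, star_trivial] at this
  rw [dotProduct_comm, ← this]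
  simp only [dotProduct_comm w]

variable [DecidableEq ι] {S : Matrix ι ι ℝ}

lemma Matrix.IsHermitian.pow_mulVec_eigenvectorBasis (hS : S.IsHermitian) (k : ℕ) (i : ι) :
    (S ^ k) *ᵥ ⇑(hS.eigenvectorBasis i) = hS.eigenvalues i ^ k • ⇑(hS.eigenvectorBasis i) := by
  induction k with
  | zero => rw [pow_zero, one_mulVec, pow_zero, one_smul]
  | succ k ih =>
    rw [pow_succ', ← mulVec_mulVec, ih, mulVec_smul, hS.mulVec_eigenvectorBasis, smul_smul,
      ← pow_succ]

lemma Matrix.IsHermitian.dotProduct_pow_mulVec (hS : S.IsHermitian) (φ : ι → ℝ) (k : ℕ) :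
    φ ⬝ᵥ (S ^ k) *ᵥ φ =
      ∑ i, (⇑(hS.eigenvectorBasis i) ⬝ᵥ φ) ^ 2 * hS.eigenvalues i ^ k := by
  rw [hS.eigenvectorBasis.dotProduct_eq_sum]
  refine sum_congr rfl fun i _ => ?_
  have hsymm : (S ^ k)ᵀ = S ^ k := by
    rw [← conjTranspose_eq_transpose_of_trivial, (hS.pow k).eq]
  rw [dotProduct_mulVec, ← mulVec_transpose, hsymm, hS.pow_mulVec_eigenvectorBasis,
    smul_dotProduct, smul_eq_mul]
  ring

end Spectral

section Symmetrization

variable {ι : Type*} {π : ι → ℝ}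

noncomputable def symmetrization (π : ι → ℝ) (P : Matrix ι ι ℝ) : Matrix ι ι ℝ :=
  of fun x y => √(π x) * P x y / √(π y)

lemma symmetrization_one [DecidableEq ι] (hπ : ∀ x, 0 < π x) : symmetrization π 1 = 1 := by
  ext x y
  rcases eq_or_ne x y with rfl | hxy
  · simp [symmetrization, (Real.sqrt_pos.2 (hπ x)).ne']
  · simp [symmetrization, hxy]

lemma symmetrization_mul [Fintype ι] (hπ : ∀ x, 0 < π x) (P Q : Matrix ι ι ℝ) :
    symmetrization π (P * Q) = symmetrization π P * symmetrization π Q := by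
  ext x y
  simp only [symmetrization, of_apply, mul_apply, mul_sum, sum_div]
  refine sum_congr rfl fun z _ => ?_
  have := (Real.sqrt_pos.2 (hπ z)).ne'
  field_simp

lemma symmetrization_pow [Fintype ι] [DecidableEq ι] (hπ : ∀ x, 0 < π x) (P : Matrix ι ι ℝ)
    (k : ℕ) :
    symmetrization π (P ^ k) = symmetrization π P ^ k := by
  induction k with
  | zero => rw [pow_zero, pow_zero, symmetrization_one hπ]
  | succ k ih => rw [pow_succ, pow_succ, symmetrization_mul hπ, ih]

lemma mulVec_div_sqrt_of_symmetrization_mulVec [Fintype ι] (hπ : ∀ x, 0 < π x)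
    {P : Matrix ι ι ℝ} {u : ι → ℝ} {μ : ℝ} (hu : symmetrization π P *ᵥ u = μ • u) :
    P *ᵥ (fun x => u x / √(π x)) = μ • fun x => u x / √(π x) := by
  ext x
  have hx := congrFun hu x
  simp only [mulVec, dotProduct, symmetrization, of_apply, Pi.smul_apply, smul_eq_mul] at hx ⊢
  have := (Real.sqrt_pos.2 (hπ x)).ne'
  rw [mul_div_assoc', ← hx, sum_div]
  refine sum_congr rfl fun y _ => ?_
  field_simp

end Symmetrization

lemma isHermitian_symmetrization {n : ℕ} {π : Fin n → ℝ} {P : Matrix (Fin n) (Fin n) ℝ}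
    (hπ : ∀ x, 0 < π x) (hrev : IsReversible π P) : (symmetrization π P).IsHermitian := by
  ext x y
  have hx := Real.sqrt_pos.2 (hπ x)
  have hy := Real.sqrt_pos.2 (hπ y)
  simp only [conjTranspose_apply, star_trivial, symmetrization, of_apply]
  rw [div_eq_div_iff hx.ne' hy.ne']
  linear_combination P y x * Real.mul_self_sqrt (hπ y).le - P x y * Real.mul_self_sqrt (hπ x).le
    + hrev y x

section Eigen

variable {ι : Type*} [Fintype ι] [DecidableEq ι] {π : ι → ℝ} {P : Matrix ι ι ℝ}

/-- An eigenvector of the symmetrization with eigenvalue `1` is a multiple of `√π`, hence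
orthogonal to every `φ ⊥ √π`; every other eigenvalue lies in `[-1, 0]`. -/
lemma dotProduct_eigenvectorBasis_eq_zero_or_mem_Icc (hπ : ∀ x, 0 < π x)
    (hP : P ∈ rowStochastic ℝ ι) (hirr : ∀ x y, ∃ k : ℕ, 0 < (P ^ k) x y)
    (heig : ∀ (μ : ℝ) (v : ι → ℝ), v ≠ 0 → P *ᵥ v = μ • v → μ = 1 ∨ μ ≤ 0)
    (hS : (symmetrization π P).IsHermitian) {φ : ι → ℝ} (hφ : ∑ x, √(π x) * φ x = 0) (i : ι) :
    ⇑(hS.eigenvectorBasis i) ⬝ᵥ φ = 0 ∨ hS.eigenvalues i ∈ Set.Icc (-1) 0 := by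
  set u := ⇑(hS.eigenvectorBasis i)
  set v : ι → ℝ := fun x => u x / √(π x)
  have hsqrt (x : ι) : √(π x) ≠ 0 := (Real.sqrt_pos.2 (hπ x)).ne'
  have hu (x : ι) : u x = √(π x) * v x := (mul_div_cancel₀ _ (hsqrt x)).symm
  have hPv : P *ᵥ v = hS.eigenvalues i • v :=
    mulVec_div_sqrt_of_symmetrization_mulVec hπ (hS.mulVec_eigenvectorBasis i)
  have hv : v ≠ 0 := by
    intro hv0
    refine (hS.eigenvectorBasis.orthonormal.ne_zero i) (WithLp.ofLp_injective 2 ?_)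
    ext x
    simp [u, hu, hv0]
  rcases heig _ v hv hPv with h1 | hneg
  · left
    rw [h1, one_smul] at hPv
    have hconst := eq_of_mulVec_eq_self hP hirr hPv
    calc u ⬝ᵥ φ = v i * ∑ x, √(π x) * φ x := by
          simp only [dotProduct, mul_sum, hu, hconst _ i]
          exact sum_congr rfl fun x _ => by ring
      _ = 0 := by rw [hφ, mul_zero]
  · exact Or.inr ⟨(abs_le.1 (abs_le_one_of_mulVec_eq_smul hP hv hPv)).1, hneg⟩

end Eigen

lemma sum_sq_mul_pow_dist_le {κ : Type*} [Fintype κ] {c l : κ → ℝ}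
    (h : ∀ i, c i = 0 ∨ l i ∈ Set.Icc (-1) 0) (N : ℕ) :
    ∑ a ∈ range N, ∑ b ∈ range N, ∑ i, c i ^ 2 * l i ^ (max a b - min a b) ≤
      N * ∑ i, c i ^ 2 := by
  calc _ = ∑ i, c i ^ 2 * ∑ a ∈ range N, ∑ b ∈ range N, l i ^ (max a b - min a b) := by
        simp only [mul_sum]
        exact (sum_congr rfl fun a _ => sum_comm).trans sum_comm
    _ ≤ ∑ i, c i ^ 2 * N := sum_le_sum fun i _ => by
        rcases h i with hc | ⟨hl₁, hl₂⟩
        · simp [hc]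
        · exact mul_le_mul_of_nonneg_left (sum_range_sum_range_pow_dist_le hl₁ hl₂ N)
            (sq_nonneg _)
    _ = N * ∑ i, c i ^ 2 := by rw [← sum_mul, mul_comm]

section Autocovariance

variable {n : ℕ} {π : Fin n → ℝ}

noncomputable def centered (π f : Fin n → ℝ) : Fin n → ℝ := fun x => f x - ∑ z, π z * f z

lemma sum_mul_centered (hπsum : ∑ x, π x = 1) (f : Fin n → ℝ) :
    ∑ x, π x * centered π f x = 0 := by
  simp only [centered, mul_sub, sum_sub_distrib, ← sum_mul, hπsum, one_mul, sub_self]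

lemma autocov_eq_dotProduct_symmetrization (hπ : ∀ x, 0 < π x) (P : Matrix (Fin n) (Fin n) ℝ)
    (f : Fin n → ℝ) (k : ℕ) :
    autocov π P f k = (fun x => √(π x) * centered π f x) ⬝ᵥ
      symmetrization π (P ^ k) *ᵥ fun x => √(π x) * centered π f x := by
  simp only [autocov, centered, dotProduct, mulVec, symmetrization, of_apply, mul_sum]
  refine sum_congr rfl fun x _ => sum_congr rfl fun y _ => ?_
  have := (Real.sqrt_pos.2 (hπ y)).ne'
  field_simp
  rw [Real.sq_sqrt (hπ x).le]
  ring

lemma varN_le_autocov_zero (hπ : ∀ x, 0 < π x) (hπsum : ∑ x, π x = 1)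
    {P : Matrix (Fin n) (Fin n) ℝ} (hP : IsStochastic P) (hirr : MatIrreducible P)
    (hrev : IsReversible π P)
    (heig : ∀ (μ : ℝ) (v : Fin n → ℝ), v ≠ 0 → P *ᵥ v = μ • v → μ = 1 ∨ μ ≤ 0)
    (f : Fin n → ℝ) {N : ℕ} (hN : N ≠ 0) : varN π P f N ≤ autocov π P f 0 := by
  set hS := isHermitian_symmetrization hπ hrev
  set φ := fun x => √(π x) * centered π f x
  set c := fun i => ⇑(hS.eigenvectorBasis i) ⬝ᵥ φ
  have hγ (k : ℕ) : autocov π P f k = ∑ i, c i ^ 2 * hS.eigenvalues i ^ k := by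
    rw [autocov_eq_dotProduct_symmetrization hπ, symmetrization_pow hπ, hS.dotProduct_pow_mulVec]
  have hφ : ∑ x, √(π x) * φ x = 0 := by
    simp only [φ, ← mul_assoc, Real.mul_self_sqrt (hπ _).le, sum_mul_centered hπsum]
  have hc := dotProduct_eigenvectorBasis_eq_zero_or_mem_Icc hπ
    (mem_rowStochastic_iff_sum.2 hP) hirr heig hS hφ
  calc varN π P f N ≤ (N : ℝ)⁻¹ * (N * ∑ i, c i ^ 2) := by
        simp only [varN, hγ]
        exact mul_le_mul_of_nonneg_left (sum_sq_mul_pow_dist_le hc N) (by positivity)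
    _ = autocov π P f 0 := by
        rw [inv_mul_cancel_left₀ (Nat.cast_ne_zero.2 hN), hγ]
        simp

lemma isIdempotentElem_of_const_rows (hπsum : ∑ x, π x = 1) :
    IsIdempotentElem (of fun _ y : Fin n => π y) := by
  ext x y
  simp [mul_apply, ← sum_mul, hπsum]

lemma autocov_const_rows_eq_zero (hπsum : ∑ x, π x = 1) (f : Fin n → ℝ) {k : ℕ} (hk : k ≠ 0) :
    autocov π (of fun _ y : Fin n => π y) f k = 0 := by
  obtain ⟨k, rfl⟩ := Nat.exists_eq_succ_of_ne_zero hk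
  rw [autocov, (isIdempotentElem_of_const_rows hπsum).pow_succ_eq]
  calc _ = (∑ x, π x * centered π f x) * ∑ y, π y * centered π f y := by
        simp only [centered, of_apply, sum_mul, mul_sum]
        exact sum_congr rfl fun x _ => sum_congr rfl fun y _ => by ring
    _ = 0 := by rw [sum_mul_centered hπsum, zero_mul]

lemma varN_eq_autocov_zero_of_autocov_eq_zero {Q : Matrix (Fin n) (Fin n) ℝ} {f : Fin n → ℝ}
    (hQ : ∀ k ≠ 0, autocov π Q f k = 0) {N : ℕ} (hN : N ≠ 0) :
    varN π Q f N = autocov π Q f 0 := by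
  have hdiag (a : ℕ) (ha : a ∈ range N) :
      ∑ b ∈ range N, autocov π Q f (max a b - min a b) = autocov π Q f 0 := by
    rw [sum_eq_single_of_mem a ha fun b _ hba => hQ _ (by omega), max_self, min_self,
      Nat.sub_self]
  rw [varN, sum_congr rfl hdiag, sum_const, card_range, nsmul_eq_mul,
    inv_mul_cancel_left₀ (Nat.cast_ne_zero.2 hN)]

end Autocovariance

theorem stmt13 {n : ℕ} (π : Fin n → ℝ) (P : Matrix (Fin n) (Fin n) ℝ)
    (hπpos : ∀ x, 0 < π x) (hπsum : ∑ x, π x = 1)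
    (hP : IsStochastic P) (hirr : MatIrreducible P) (hrev : IsReversible π P)
    (heig : ∀ (μ : ℝ) (v : Fin n → ℝ), v ≠ 0 → P.mulVec v = μ • v →
      μ = 1 ∨ μ ≤ 0) :
    EffDom π P (Matrix.of fun _ y : Fin n => π y) := by
  intro f vP vQ hvP hvQ
  have hiid : HasAsymptVar π (of fun _ y : Fin n => π y) f (autocov π P f 0) :=
    tendsto_const_nhds.congr' <| (eventually_ne_atTop 0).mono fun N hN =>
      (varN_eq_autocov_zero_of_autocov_eq_zero
        (fun _ hk => autocov_const_rows_eq_zero hπsum f hk) hN).symm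
  rw [tendsto_nhds_unique hvQ hiid]
  exact le_of_tendsto hvP <| (eventually_ne_atTop 0).mono fun N hN =>
    varN_le_autocov_zero hπpos hπsum hP hirr hrev heig f hN
end

section
/- If P and Q are irreducible transition matrices reversible with respect to π, P efficiency-dominates Q, and P ≠ Q, then trace(P) < trace(Q). -/
open Matrix BigOperators Filter

/-!
Conjugating by `√π` turns a `π`-reversible `P` into a symmetric matrix `A_P` with the same trace,
spectrum in `[-1, 1]` and, by irreducibility, `1`-eigenspace spanned by `√π`. Expanding in an
eigenbasis, the asymptotic variance of `g / √π` (for `g ⊥ √π`) is `2 ⟪g, (1 - A_P)⁻¹ g⟫ - ‖g‖²`,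
so efficiency domination says `(1 - A_P)⁻¹ ≤ (1 - A_Q)⁻¹` on `√π^⊥`. Testing this at
`g = (1 - A_Q) h` against `2 ⟪h, g⟫ - ⟪h, (1 - A_P) h⟫ ≤ ⟪g, (1 - A_P)⁻¹ g⟫` gives `A_P ≤ A_Q`
in the Loewner order. Hence `tr Q - tr P = tr (A_Q - A_P) ≥ 0`, with equality only if the
positive semidefinite `A_Q - A_P` vanishes, i.e. `P = Q`.
-/

open Finset Topology

lemma sum_range_pow_sub_mul_one_sub (μ : ℝ) (N : ℕ) :
    (∑ i ∈ range N, μ ^ (N - i)) * (1 - μ) = μ - μ ^ (N + 1) := by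
  rw [← sum_range_reflect]
  have : ∀ j ∈ range N, μ ^ (N - (N - 1 - j)) = μ * μ ^ j := fun j hj => by
    rw [mem_range] at hj
    rw [show N - (N - 1 - j) = j + 1 by omega, pow_succ']
  rw [sum_congr rfl this, ← mul_sum, mul_assoc, geom_sum_mul_neg]
  ring

lemma sum_range_sum_range_pow_dist_mul (μ : ℝ) (N : ℕ) :
    (∑ i ∈ range N, ∑ j ∈ range N, μ ^ (max i j - min i j)) * (1 - μ) ^ 2
      = N * (1 - μ ^ 2) - 2 * μ + 2 * μ ^ (N + 1) := by
  induction N with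
  | zero => simp
  | succ N ih =>
    have hcol : ∀ i ∈ range N, μ ^ (max i N - min i N) = μ ^ (N - i) := fun i hi => by
      rw [max_eq_right (mem_range.mp hi).le, min_eq_left (mem_range.mp hi).le]
    have hrow : ∀ j ∈ range N, μ ^ (max N j - min N j) = μ ^ (N - j) := fun j hj => by
      rw [max_eq_left (mem_range.mp hj).le, min_eq_right (mem_range.mp hj).le]
    simp only [sum_range_succ, sum_add_distrib, sum_congr rfl hcol, sum_congr rfl hrow,
      max_self, min_self, Nat.sub_self, pow_zero]
    push_cast
    linear_combination ih + 2 * (1 - μ) * sum_range_pow_sub_mul_one_sub μ N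

lemma tendsto_cesaro_pow_dist {μ : ℝ} (h1 : |μ| ≤ 1) (h2 : μ ≠ 1) :
    Tendsto (fun N : ℕ => (N : ℝ)⁻¹ * ∑ i ∈ range N, ∑ j ∈ range N, μ ^ (max i j - min i j))
      atTop (𝓝 ((1 + μ) / (1 - μ))) := by
  have hμ : (1 - μ) ^ 2 ≠ 0 := pow_ne_zero 2 (sub_ne_zero.mpr h2.symm)
  have hbdd : ∀ N : ℕ, ‖(2 * μ ^ (N + 1) - 2 * μ) / N‖ ≤ 4 / N := fun N => by
    rw [norm_div, Real.norm_natCast, Real.norm_eq_abs]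
    gcongr
    have hpow := pow_le_one₀ (abs_nonneg μ) h1 (n := N + 1)
    calc |2 * μ ^ (N + 1) - 2 * μ| ≤ 2 * |μ| ^ (N + 1) + 2 * |μ| := by
          simpa [abs_mul, abs_pow] using abs_sub (2 * μ ^ (N + 1)) (2 * μ)
      _ ≤ 4 := by linarith
  have hrem := squeeze_zero_norm hbdd (tendsto_const_div_atTop_nhds_zero_nat 4)
  have hlim := ((tendsto_const_nhds (x := 1 - μ ^ 2)).add hrem).div_const ((1 - μ) ^ 2)
  rw [add_zero, show (1 - μ ^ 2) / (1 - μ) ^ 2 = (1 + μ) / (1 - μ) by field_simp; ring] at hlim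
  refine hlim.congr' ?_
  filter_upwards [eventually_ne_atTop 0] with N hN
  have hS := sum_range_sum_range_pow_dist_mul μ N
  field_simp
  linear_combination -hS

namespace Matrix.IsHermitian

variable {ι : Type*} [Fintype ι] [DecidableEq ι] {A : Matrix ι ι ℝ} (hA : A.IsHermitian)

noncomputable def eigenCoeff (g : ι → ℝ) (m : ι) : ℝ := ⇑(hA.eigenvectorBasis m) ⬝ᵥ g

lemma dotProduct_eq_sum_eigenCoeff (g h : ι → ℝ) :
    g ⬝ᵥ h = ∑ m, hA.eigenCoeff g m * hA.eigenCoeff h m := by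
  have := hA.eigenvectorBasis.sum_inner_mul_inner (WithLp.toLp 2 g) (WithLp.toLp 2 h)
  simp only [EuclideanSpace.inner_eq_star_dotProduct, star_trivial, dotProduct_comm h] at this
  exact this.symm

lemma eigenCoeff_sub (g h : ι → ℝ) (m : ι) :
    hA.eigenCoeff (g - h) m = hA.eigenCoeff g m - hA.eigenCoeff h m :=
  dotProduct_sub _ _ _

lemma eigenCoeff_mulVec (g : ι → ℝ) (m : ι) :
    hA.eigenCoeff (A *ᵥ g) m = hA.eigenvalues m * hA.eigenCoeff g m := by
  rw [eigenCoeff, dotProduct_mulVec, ← mulVec_transpose, isHermitian_iff_isSymm.mp hA,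
    hA.mulVec_eigenvectorBasis, smul_dotProduct, smul_eq_mul, eigenCoeff]

lemma eigenCoeff_pow_mulVec (k : ℕ) (g : ι → ℝ) (m : ι) :
    hA.eigenCoeff (A ^ k *ᵥ g) m = hA.eigenvalues m ^ k * hA.eigenCoeff g m := by
  induction k with
  | zero => simp
  | succ k ih => rw [pow_succ', ← mulVec_mulVec, hA.eigenCoeff_mulVec, ih, pow_succ']; ring

lemma dotProduct_pow_mulVec_s14 (k : ℕ) (g : ι → ℝ) :
    g ⬝ᵥ (A ^ k *ᵥ g) = ∑ m, hA.eigenCoeff g m ^ 2 * hA.eigenvalues m ^ k := by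
  rw [hA.dotProduct_eq_sum_eigenCoeff]
  exact sum_congr rfl fun m _ => by rw [hA.eigenCoeff_pow_mulVec]; ring

/-- `⟪g, (1 - A)⁻¹ g⟫` on the orthogonal complement of `ker (1 - A)`; eigenvalues equal to `1`
contribute nothing since `(1 - 1)⁻¹ = 0`. -/
noncomputable def greenForm (g : ι → ℝ) : ℝ :=
  ∑ m, hA.eigenCoeff g m ^ 2 * (1 - hA.eigenvalues m)⁻¹

lemma greenForm_sub_mulVec (h : ι → ℝ) : hA.greenForm (h - A *ᵥ h) = h ⬝ᵥ (h - A *ᵥ h) := by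
  rw [hA.dotProduct_eq_sum_eigenCoeff, greenForm]
  refine sum_congr rfl fun m _ => ?_
  rw [hA.eigenCoeff_sub, hA.eigenCoeff_mulVec]
  rcases eq_or_ne (1 - hA.eigenvalues m) 0 with h1 | h1
  · simp [h1, ← one_sub_mul]
  · field_simp

lemma le_greenForm (hle : ∀ m, hA.eigenvalues m ≤ 1) {g : ι → ℝ}
    (hg : ∀ m, hA.eigenvalues m = 1 → hA.eigenCoeff g m = 0) (h : ι → ℝ) :
    2 * (h ⬝ᵥ g) - h ⬝ᵥ (h - A *ᵥ h) ≤ hA.greenForm g := by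
  rw [hA.dotProduct_eq_sum_eigenCoeff, hA.dotProduct_eq_sum_eigenCoeff, greenForm, mul_sum,
    ← sum_sub_distrib]
  refine sum_le_sum fun m _ => ?_
  rw [hA.eigenCoeff_sub, hA.eigenCoeff_mulVec]
  rcases (hle m).eq_or_lt with h1 | h1
  · simp [hg m h1, h1]
  · have hpos : 0 < 1 - hA.eigenvalues m := sub_pos.mpr h1
    rw [← div_eq_mul_inv, le_div_iff₀ hpos]
    nlinarith [sq_nonneg (hA.eigenCoeff g m - (1 - hA.eigenvalues m) * hA.eigenCoeff h m)]

lemma tendsto_cesaro_dotProduct_pow (habs : ∀ m, |hA.eigenvalues m| ≤ 1) {g : ι → ℝ}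
    (hg : ∀ m, hA.eigenvalues m = 1 → hA.eigenCoeff g m = 0) :
    Tendsto (fun N : ℕ => (N : ℝ)⁻¹ * ∑ i ∈ range N, ∑ j ∈ range N,
      g ⬝ᵥ (A ^ (max i j - min i j) *ᵥ g)) atTop (𝓝 (2 * hA.greenForm g - g ⬝ᵥ g)) := by
  have hterm : ∀ m, Tendsto (fun N : ℕ => hA.eigenCoeff g m ^ 2 * ((N : ℝ)⁻¹ *
      ∑ i ∈ range N, ∑ j ∈ range N, hA.eigenvalues m ^ (max i j - min i j))) atTop
      (𝓝 (hA.eigenCoeff g m ^ 2 * (2 * (1 - hA.eigenvalues m)⁻¹ - 1))) := fun m => by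
    rcases eq_or_ne (hA.eigenvalues m) 1 with h1 | h1
    · simp [hg m h1]
    · convert (tendsto_cesaro_pow_dist (habs m) h1).const_mul (hA.eigenCoeff g m ^ 2) using 2
      field_simp [sub_ne_zero.mpr h1.symm]
      ring
  convert tendsto_finsetSum univ fun m _ => hterm m using 1
  · ext N
    simp only [hA.dotProduct_pow_mulVec_s14, mul_sum]
    rw [sum_comm (s := univ)]
    refine sum_congr rfl fun i _ => ?_
    rw [sum_comm (s := univ)]
    exact sum_congr rfl fun j _ => sum_congr rfl fun m _ => by ring
  · rw [greenForm, hA.dotProduct_eq_sum_eigenCoeff, mul_sum, ← sum_sub_distrib]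
    exact congrArg 𝓝 (sum_congr rfl fun m _ => by ring)

end Matrix.IsHermitian

lemma mulVec_pow_eq_of_mulVec_eq {ι : Type*} [Fintype ι] [DecidableEq ι] {M : Matrix ι ι ℝ}
    {w : ι → ℝ} (hw : M *ᵥ w = w) (k : ℕ) : M ^ k *ᵥ w = w := by
  induction k with
  | zero => simp
  | succ k ih => rw [pow_succ, ← mulVec_mulVec, hw, ih]

section Stochastic

variable {n : ℕ} {P : Matrix (Fin n) (Fin n) ℝ}

lemma isStochastic_iff_mem_rowStochastic : IsStochastic P ↔ P ∈ rowStochastic ℝ (Fin n) :=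
  mem_rowStochastic_iff_sum.symm

lemma IsStochastic.pow (hP : IsStochastic P) (k : ℕ) : IsStochastic (P ^ k) :=
  isStochastic_iff_mem_rowStochastic.mpr <|
    pow_mem (isStochastic_iff_mem_rowStochastic.mp hP) k

lemma IsStochastic.abs_le_one_of_mulVec_eq_smul (hP : IsStochastic P) {w : Fin n → ℝ} {μ : ℝ}
    (hw : P *ᵥ w = μ • w) (hw0 : w ≠ 0) : |μ| ≤ 1 := by
  obtain ⟨x, hx⟩ := Function.ne_iff.mp hw0
  obtain ⟨x₀, -, hmax⟩ := exists_max_image univ (fun x => |w x|) ⟨x, mem_univ x⟩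
  have hpos : 0 < |w x₀| := (abs_pos.mpr hx).trans_le (hmax x (mem_univ x))
  have hle : |μ| * |w x₀| ≤ |w x₀| := calc
    |μ| * |w x₀| = |∑ y, P x₀ y * w y| := by
        rw [← abs_mul, ← smul_eq_mul, ← Pi.smul_apply, ← hw]; rfl
    _ ≤ ∑ y, P x₀ y * |w x₀| := by
        refine (abs_sum_le_sum_abs _ _).trans (sum_le_sum fun y _ => ?_)
        rw [abs_mul, abs_of_nonneg (hP.1 x₀ y)]
        exact mul_le_mul_of_nonneg_left (hmax y (mem_univ y)) (hP.1 x₀ y)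
    _ = |w x₀| := by rw [← sum_mul, hP.2 x₀, one_mul]
  exact (mul_le_iff_le_one_left hpos).mp hle

lemma IsStochastic.eq_of_mulVec_eq_of_pos (hP : IsStochastic P) {w : Fin n → ℝ}
    (hw : P *ᵥ w = w) {x y : Fin n} (hmax : ∀ z, w z ≤ w x) (hxy : 0 < P x y) : w y = w x := by
  have hzero : ∑ z, P x z * (w x - w z) = 0 := by
    simp only [mul_sub, sum_sub_distrib, ← sum_mul, hP.2 x, one_mul]
    rw [← congrFun hw x]
    exact sub_self _
  have := (sum_eq_zero_iff_of_nonneg fun z _ =>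
    mul_nonneg (hP.1 x z) (sub_nonneg.mpr (hmax z))).mp hzero y (mem_univ y)
  rcases mul_eq_zero.mp this with h | h
  · exact absurd h hxy.ne'
  · linarith

lemma MatIrreducible.exists_eq_const_of_mulVec_eq (hP : IsStochastic P)
    (hirr : MatIrreducible P) {w : Fin n → ℝ} (hw : P *ᵥ w = w) : ∃ c, w = fun _ => c := by
  rcases isEmpty_or_nonempty (Fin n) with _ | _
  · exact ⟨0, Subsingleton.elim _ _⟩
  obtain ⟨x₀, -, hmax⟩ := exists_max_image univ w univ_nonempty
  refine ⟨w x₀, funext fun y => ?_⟩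
  obtain ⟨k, hk⟩ := hirr x₀ y
  exact (hP.pow k).eq_of_mulVec_eq_of_pos (mulVec_pow_eq_of_mulVec_eq hw k)
    (fun z => hmax z (mem_univ z)) hk

end Stochastic

section Symmetrization

variable {n : ℕ} {π : Fin n → ℝ} {P Q : Matrix (Fin n) (Fin n) ℝ}

/-- The matrix `A_P = D^{1/2} P D^{-1/2}`, `D = diagonal π`. -/
noncomputable def symmetrized (π : Fin n → ℝ) (P : Matrix (Fin n) (Fin n) ℝ) :
    Matrix (Fin n) (Fin n) ℝ :=
  of fun x y => √(π x) * P x y / √(π y)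

lemma symmetrized_mul (hπ : ∀ x, 0 < π x) :
    symmetrized π P * symmetrized π Q = symmetrized π (P * Q) := by
  ext x y
  simp only [symmetrized, mul_apply, of_apply, sum_div, mul_sum]
  refine sum_congr rfl fun z _ => ?_
  have := (Real.sqrt_pos.mpr (hπ z)).ne'
  field_simp

lemma symmetrized_one (hπ : ∀ x, 0 < π x) : symmetrized π 1 = 1 := by
  ext x y
  rcases eq_or_ne x y with rfl | hxy
  · have := (Real.sqrt_pos.mpr (hπ x)).ne'
    simp [symmetrized, this]
  · simp [symmetrized, hxy]

lemma symmetrized_pow (hπ : ∀ x, 0 < π x) (k : ℕ) :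
    symmetrized π P ^ k = symmetrized π (P ^ k) := by
  induction k with
  | zero => rw [pow_zero, pow_zero, symmetrized_one hπ]
  | succ k ih => rw [pow_succ, pow_succ, ih, symmetrized_mul hπ]

lemma symmetrized_isHermitian (hπ : ∀ x, 0 < π x) (hrev : IsReversible π P) :
    (symmetrized π P).IsHermitian := by
  refine IsHermitian.ext fun x y => ?_
  have hx := Real.sqrt_pos.mpr (hπ x)
  have hy := Real.sqrt_pos.mpr (hπ y)
  simp only [symmetrized, of_apply, star_trivial]
  rw [div_eq_div_iff hx.ne' hy.ne']
  have := hrev y x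
  rw [← Real.mul_self_sqrt (hπ x).le, ← Real.mul_self_sqrt (hπ y).le] at this
  linear_combination this

lemma symmetrized_apply_self (hπ : ∀ x, 0 < π x) (x : Fin n) : symmetrized π P x x = P x x := by
  have := (Real.sqrt_pos.mpr (hπ x)).ne'
  simp only [symmetrized, of_apply]
  field_simp

lemma trace_symmetrized (hπ : ∀ x, 0 < π x) : (symmetrized π P).trace = P.trace :=
  sum_congr rfl fun x _ => symmetrized_apply_self hπ x

lemma symmetrized_injective (hπ : ∀ x, 0 < π x) : Function.Injective (symmetrized π) := by
  intro P Q h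
  ext x y
  have hxy := congrFun (congrFun h x) y
  have hx := (Real.sqrt_pos.mpr (hπ x)).ne'
  have hy := (Real.sqrt_pos.mpr (hπ y)).ne'
  simp only [symmetrized, of_apply] at hxy
  field_simp at hxy
  exact hxy

lemma symmetrized_mulVec_mul (hπ : ∀ x, 0 < π x) (w : Fin n → ℝ) :
    symmetrized π P *ᵥ (Real.sqrt ∘ π * w) = Real.sqrt ∘ π * (P *ᵥ w) := by
  ext x
  simp only [mulVec, dotProduct, symmetrized, of_apply, Pi.mul_apply, Function.comp_apply,
    mul_sum]
  refine sum_congr rfl fun y _ => ?_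
  have := (Real.sqrt_pos.mpr (hπ y)).ne'
  field_simp

lemma symmetrized_mulVec_sqrt (hπ : ∀ x, 0 < π x) (hP : IsStochastic P) :
    symmetrized π P *ᵥ (Real.sqrt ∘ π) = Real.sqrt ∘ π := by
  simpa [one_vecMul_of_mem_rowStochastic (isStochastic_iff_mem_rowStochastic.mp hP)] using
    symmetrized_mulVec_mul (P := P) hπ 1

lemma mulVec_div_sqrt_of_symmetrized (hπ : ∀ x, 0 < π x) {u : Fin n → ℝ} {μ : ℝ}
    (hu : symmetrized π P *ᵥ u = μ • u) :
    P *ᵥ (u / Real.sqrt ∘ π) = μ • (u / Real.sqrt ∘ π) := by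
  have hsu : Real.sqrt ∘ π * (u / Real.sqrt ∘ π) = u := funext fun x => by
    have := (Real.sqrt_pos.mpr (hπ x)).ne'
    simp only [Pi.mul_apply, Pi.div_apply, Function.comp_apply]
    field_simp
  have h := symmetrized_mulVec_mul (P := P) hπ (u / Real.sqrt ∘ π)
  rw [hsu, hu] at h
  nth_rewrite 1 [← hsu] at h
  rw [← mul_smul_comm] at h
  ext x
  have := congrFun h x
  simp only [Pi.mul_apply, Function.comp_apply] at this
  exact (mul_left_cancel₀ (Real.sqrt_pos.mpr (hπ x)).ne' this).symm

end Symmetrization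

section Variance

variable {n : ℕ} {π : Fin n → ℝ} {P : Matrix (Fin n) (Fin n) ℝ}

lemma abs_eigenvalues_symmetrized_le_one (hπ : ∀ x, 0 < π x) (hP : IsStochastic P)
    (hA : (symmetrized π P).IsHermitian) (m : Fin n) : |hA.eigenvalues m| ≤ 1 := by
  refine hP.abs_le_one_of_mulVec_eq_smul
    (mulVec_div_sqrt_of_symmetrized hπ (hA.mulVec_eigenvectorBasis m)) fun h0 => ?_
  refine hA.eigenvectorBasis.orthonormal.ne_zero m (PiLp.ext fun x => ?_)
  have := congrFun h0 x
  rw [Pi.div_apply, Pi.zero_apply, Function.comp_apply, div_eq_zero_iff] at this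
  exact this.resolve_right (Real.sqrt_pos.mpr (hπ x)).ne'

/-- By irreducibility the `1`-eigenspace of the symmetrized matrix is spanned by `√π`. -/
lemma eigenCoeff_symmetrized_eq_zero (hπ : ∀ x, 0 < π x) (hP : IsStochastic P)
    (hirr : MatIrreducible P) (hA : (symmetrized π P).IsHermitian) {g : Fin n → ℝ}
    (hg : (Real.sqrt ∘ π) ⬝ᵥ g = 0) {m : Fin n} (hm : hA.eigenvalues m = 1) :
    hA.eigenCoeff g m = 0 := by
  set u : Fin n → ℝ := ⇑(hA.eigenvectorBasis m)
  have hu : symmetrized π P *ᵥ u = (1 : ℝ) • u := hm ▸ hA.mulVec_eigenvectorBasis m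
  obtain ⟨c, hc⟩ := hirr.exists_eq_const_of_mulVec_eq hP
    ((mulVec_div_sqrt_of_symmetrized hπ hu).trans (one_smul _ _))
  have hus : u = c • (Real.sqrt ∘ π) := funext fun x => by
    have hx := congrFun hc x
    rw [Pi.div_apply, Function.comp_apply, div_eq_iff (Real.sqrt_pos.mpr (hπ x)).ne'] at hx
    exact hx
  change u ⬝ᵥ g = 0
  rw [hus, smul_dotProduct, hg, smul_zero]

lemma autocov_div_sqrt (hπ : ∀ x, 0 < π x) {g : Fin n → ℝ} (hg : (Real.sqrt ∘ π) ⬝ᵥ g = 0)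
    (k : ℕ) : autocov π P (g / Real.sqrt ∘ π) k = g ⬝ᵥ (symmetrized π P ^ k *ᵥ g) := by
  have hmean : ∑ z, π z * (g / Real.sqrt ∘ π) z = 0 := by
    rw [← hg]
    refine sum_congr rfl fun z _ => ?_
    have := Real.sqrt_pos.mpr (hπ z)
    simp only [Pi.div_apply, Function.comp_apply]
    field_simp
    rw [Real.sq_sqrt (hπ z).le]
    ring
  rw [symmetrized_pow hπ]
  simp only [autocov, hmean, sub_zero, dotProduct, mulVec, symmetrized, of_apply, mul_sum]
  refine sum_congr rfl fun x _ => sum_congr rfl fun y _ => ?_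
  have := Real.sqrt_pos.mpr (hπ x)
  have := Real.sqrt_pos.mpr (hπ y)
  simp only [Pi.div_apply, Function.comp_apply]
  field_simp
  rw [Real.sq_sqrt (hπ x).le]
  ring

lemma hasAsymptVar_div_sqrt (hπ : ∀ x, 0 < π x) (hP : IsStochastic P) (hirr : MatIrreducible P)
    (hA : (symmetrized π P).IsHermitian) {g : Fin n → ℝ} (hg : (Real.sqrt ∘ π) ⬝ᵥ g = 0) :
    HasAsymptVar π P (g / Real.sqrt ∘ π) (2 * hA.greenForm g - g ⬝ᵥ g) := by
  unfold HasAsymptVar varN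
  simp only [autocov_div_sqrt hπ hg]
  exact hA.tendsto_cesaro_dotProduct_pow (abs_eigenvalues_symmetrized_le_one hπ hP hA)
    fun m hm => eigenCoeff_symmetrized_eq_zero hπ hP hirr hA hg hm

end Variance

section Dominance

variable {n : ℕ} {π : Fin n → ℝ} {P Q : Matrix (Fin n) (Fin n) ℝ}

lemma EffDom.greenForm_le (hdom : EffDom π P Q) (hπ : ∀ x, 0 < π x)
    (hP : IsStochastic P) (hQ : IsStochastic Q) (hirrP : MatIrreducible P)
    (hirrQ : MatIrreducible Q) (hAP : (symmetrized π P).IsHermitian)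
    (hAQ : (symmetrized π Q).IsHermitian) {g : Fin n → ℝ} (hg : (Real.sqrt ∘ π) ⬝ᵥ g = 0) :
    hAP.greenForm g ≤ hAQ.greenForm g := by
  have := hdom _ _ _ (hasAsymptVar_div_sqrt hπ hP hirrP hAP hg)
    (hasAsymptVar_div_sqrt hπ hQ hirrQ hAQ hg)
  linarith

lemma sqrt_dotProduct_sub_symmetrized_mulVec (hπ : ∀ x, 0 < π x) (hP : IsStochastic P)
    (hA : (symmetrized π P).IsHermitian) (h : Fin n → ℝ) :
    (Real.sqrt ∘ π) ⬝ᵥ (h - symmetrized π P *ᵥ h) = 0 := by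
  rw [dotProduct_sub, dotProduct_mulVec, ← mulVec_transpose, isHermitian_iff_isSymm.mp hA,
    symmetrized_mulVec_sqrt hπ hP, sub_self]

lemma EffDom.posSemidef_sub (hdom : EffDom π P Q) (hπ : ∀ x, 0 < π x)
    (hP : IsStochastic P) (hQ : IsStochastic Q) (hirrP : MatIrreducible P)
    (hirrQ : MatIrreducible Q) (hAP : (symmetrized π P).IsHermitian)
    (hAQ : (symmetrized π Q).IsHermitian) :
    (symmetrized π Q - symmetrized π P).PosSemidef := by
  refine PosSemidef.of_dotProduct_mulVec_nonneg (hAQ.sub hAP) fun h => ?_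
  have hg := sqrt_dotProduct_sub_symmetrized_mulVec hπ hQ hAQ h
  have hlow := hAP.le_greenForm (fun m => (abs_le.mp (abs_eigenvalues_symmetrized_le_one
    hπ hP hAP m)).2) (fun m hm => eigenCoeff_symmetrized_eq_zero hπ hP hirrP hAP hg hm) h
  have hcompare := hdom.greenForm_le hπ hP hQ hirrP hirrQ hAP hAQ hg
  have hgreenQ := hAQ.greenForm_sub_mulVec h
  simp only [star_trivial, sub_mulVec, dotProduct_sub] at hlow hgreenQ ⊢
  linarith

end Dominance

theorem stmt14_general {n : ℕ} (π : Fin n → ℝ) (P Q : Matrix (Fin n) (Fin n) ℝ)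
    (hπpos : ∀ x, 0 < π x)
    (hP : IsStochastic P) (hQ : IsStochastic Q)
    (hirrP : MatIrreducible P) (hirrQ : MatIrreducible Q)
    (hrevP : IsReversible π P) (hrevQ : IsReversible π Q)
    (hdom : EffDom π P Q) (hne : P ≠ Q) :
    P.trace < Q.trace := by
  have hAP := symmetrized_isHermitian hπpos hrevP
  have hAQ := symmetrized_isHermitian hπpos hrevQ
  have hpsd := hdom.posSemidef_sub hπpos hP hQ hirrP hirrQ hAP hAQ
  have htrace : (symmetrized π Q - symmetrized π P).trace = Q.trace - P.trace := by
    rw [trace_sub, trace_symmetrized hπpos, trace_symmetrized hπpos]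
  refine lt_of_le_of_ne (sub_nonneg.mp (htrace ▸ hpsd.trace_nonneg)) fun heq => hne ?_
  have hzero := hpsd.trace_eq_zero_iff.mp (by rw [htrace, heq, sub_self])
  exact symmetrized_injective hπpos (sub_eq_zero.mp hzero).symm

theorem stmt14 {n : ℕ} (π : Fin n → ℝ) (P Q : Matrix (Fin n) (Fin n) ℝ)
    (hπpos : ∀ x, 0 < π x) (hπsum : ∑ x, π x = 1)
    (hP : IsStochastic P) (hQ : IsStochastic Q)
    (hirrP : MatIrreducible P) (hirrQ : MatIrreducible Q)
    (hrevP : IsReversible π P) (hrevQ : IsReversible π Q)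
    (hdom : EffDom π P Q) (hne : P ≠ Q) :
    P.trace < Q.trace :=
  stmt14_general π P Q hπpos hP hQ hirrP hirrQ hrevP hrevQ hdom hne
end

section
/- If P and Q are irreducible transition matrices reversible with respect to π, have identical eigenvalues counting multiplicity, and P ≠ Q, then neither efficiency-dominates the other. -/
open Matrix BigOperators Filter

/-!
Expanding the centred function `f - π f` in a `π`-orthonormal eigenbasis of `P`, the asymptotic
variance of `f` is `∑ₘ ⟪f - π f, vₘ⟫² (1 + λₘ) / (1 - λₘ)`; by irreducibility the eigenvalue `1`
contributes nothing. Giving the eigenvalue `1` the weight `-1` instead turns this into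
`⟪f, φ(P) f⟫ - (π f)²`, where `φ(λ) = (1 + λ) / (1 - λ)`, `φ(1) = -1`, is injective. So if `P`
efficiency-dominates `Q`, then `φ(Q) - φ(P)` is positive semidefinite; its trace vanishes because
`P` and `Q` have the same eigenvalues, hence `φ(P) = φ(Q)`, and injectivity of `φ` gives `P = Q`.
-/

open Finset

section

variable {n : ℕ}

section InnerProduct

variable (π : Fin n → ℝ)

lemma pInner_comm (f g : Fin n → ℝ) : pInner π f g = pInner π g f :=
  sum_congr rfl fun _ _ => by ring

lemma pInner_add_left (f g h : Fin n → ℝ) :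
    pInner π (f + g) h = pInner π f h + pInner π g h := by
  simp only [pInner, Pi.add_apply, ← sum_add_distrib, add_mul]

lemma pInner_smul_left (c : ℝ) (f g : Fin n → ℝ) : pInner π (c • f) g = c * pInner π f g := by
  simp only [pInner, Pi.smul_apply, smul_eq_mul, mul_sum, mul_assoc]

lemma pInner_sum_smul_left {ι : Type*} [Fintype ι] (c : ι → ℝ) (u : ι → Fin n → ℝ)
    (g : Fin n → ℝ) : pInner π (∑ i, c i • u i) g = ∑ i, c i * pInner π (u i) g := by
  simp only [pInner, Finset.sum_apply, Pi.smul_apply, smul_eq_mul, sum_mul, mul_sum]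
  exact sum_comm.trans (sum_congr rfl fun _ _ => sum_congr rfl fun _ _ => by ring)

lemma pInner_sum_smul_right {ι : Type*} [Fintype ι] (c : ι → ℝ) (u : ι → Fin n → ℝ)
    (f : Fin n → ℝ) : pInner π f (∑ i, c i • u i) = ∑ i, c i * pInner π f (u i) := by
  simp only [pInner_comm π f, pInner_sum_smul_left]

def IsPOrthonormal (v : Fin n → Fin n → ℝ) : Prop :=
  ∀ i j, pInner π (v i) (v j) = if i = j then 1 else 0

variable {π} {v : Fin n → Fin n → ℝ}

-- Completeness: the family is a square matrix with a one-sided, hence two-sided, inverse.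
lemma IsPOrthonormal.sum_mul_mul (hv : IsPOrthonormal π v) (x y : Fin n) :
    (∑ i, v i x * v i y) * π y = if x = y then 1 else 0 := by
  let A : Matrix (Fin n) (Fin n) ℝ := of fun i z => v i z * π z
  let B : Matrix (Fin n) (Fin n) ℝ := of fun z i => v i z
  have hAB : A * B = 1 := by
    ext i j
    rw [mul_apply, one_apply, ← hv i j]
    exact sum_congr rfl fun _ _ => by simp only [A, B, of_apply]; ring
  have hBA : (B * A) x y = (1 : Matrix (Fin n) (Fin n) ℝ) x y := by rw [mul_eq_one_comm.mp hAB]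
  rw [mul_apply, one_apply] at hBA
  rw [← hBA, sum_mul]
  exact sum_congr rfl fun _ _ => by simp only [A, B, of_apply]; ring

lemma IsPOrthonormal.sum_pInner_smul (hv : IsPOrthonormal π v) (f : Fin n → ℝ) :
    ∑ i, pInner π f (v i) • v i = f := by
  ext x
  calc (∑ i, pInner π f (v i) • v i) x = ∑ y, f y * ((∑ i, v i x * v i y) * π y) := by
        simp only [Finset.sum_apply, Pi.smul_apply, smul_eq_mul, pInner, sum_mul, mul_sum]
        exact sum_comm.trans (sum_congr rfl fun _ _ => sum_congr rfl fun _ _ => by ring)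
    _ = f x := by simp [hv.sum_mul_mul]

lemma IsPOrthonormal.sum_pInner_sq (hv : IsPOrthonormal π v) (f : Fin n → ℝ) :
    ∑ i, pInner π f (v i) ^ 2 = pInner π f f := by
  calc ∑ i, pInner π f (v i) ^ 2 = pInner π (∑ i, pInner π f (v i) • v i) f := by
        rw [pInner_sum_smul_left]
        exact sum_congr rfl fun i _ => by rw [pInner_comm π (v i), sq]
    _ = pInner π f f := by rw [hv.sum_pInner_smul]

lemma IsPOrthonormal.ext (hv : IsPOrthonormal π v) {f g : Fin n → ℝ}
    (h : ∀ i, pInner π f (v i) = pInner π g (v i)) : f = g := by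
  rw [← hv.sum_pInner_smul f, ← hv.sum_pInner_smul g]
  simp only [h]

end InnerProduct

section SpectralForm

variable {π : Fin n → ℝ} {v w : Fin n → Fin n → ℝ}

noncomputable def spectralForm (π a : Fin n → ℝ) (v : Fin n → Fin n → ℝ) (f g : Fin n → ℝ) : ℝ :=
  ∑ m, a m * (pInner π f (v m) * pInner π g (v m))

lemma spectralForm_comm (a : Fin n → ℝ) (f g : Fin n → ℝ) :
    spectralForm π a v f g = spectralForm π a v g f :=
  sum_congr rfl fun _ _ => by ring

lemma spectralForm_sum_smul_left (a : Fin n → ℝ) (c : Fin n → ℝ) (u : Fin n → Fin n → ℝ)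
    (g : Fin n → ℝ) :
    spectralForm π a v (∑ i, c i • u i) g = ∑ i, c i * spectralForm π a v (u i) g := by
  simp only [spectralForm, pInner_sum_smul_left, sum_mul, mul_sum]
  exact sum_comm.trans (sum_congr rfl fun _ _ => sum_congr rfl fun _ _ => by ring)

lemma spectralForm_sum_smul_right (a : Fin n → ℝ) (c : Fin n → ℝ) (u : Fin n → Fin n → ℝ)
    (f : Fin n → ℝ) :
    spectralForm π a v f (∑ i, c i • u i) = ∑ i, c i * spectralForm π a v f (u i) := by
  simp only [spectralForm_comm a f, spectralForm_sum_smul_left]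

lemma spectralForm_add_smul_self (a : Fin n → ℝ) (f g : Fin n → ℝ) (t : ℝ) :
    spectralForm π a v (f + t • g) (f + t • g) = spectralForm π a v f f
      + 2 * t * spectralForm π a v f g + t ^ 2 * spectralForm π a v g g := by
  simp only [spectralForm, pInner_add_left, pInner_smul_left, mul_sum, ← sum_add_distrib]
  exact sum_congr rfl fun _ _ => by ring

lemma spectralForm_basis_right (hv : IsPOrthonormal π v) (a : Fin n → ℝ) (f : Fin n → ℝ)
    (j : Fin n) : spectralForm π a v f (v j) = a j * pInner π f (v j) := by
  simp [spectralForm, hv j]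

lemma sum_spectralForm_basis (hv : IsPOrthonormal π v) (hw : IsPOrthonormal π w)
    (a : Fin n → ℝ) : ∑ i, spectralForm π a v (w i) (w i) = ∑ m, a m := by
  simp only [spectralForm, ← sq]
  rw [sum_comm]
  refine sum_congr rfl fun m _ => ?_
  simp only [pInner_comm π (w _) (v m), ← mul_sum, hw.sum_pInner_sq, hv m m, if_true, mul_one]

-- The difference of the two forms is positive semidefinite with trace `∑ a - ∑ a = 0`.
lemma spectralForm_eq_of_forall_le (hv : IsPOrthonormal π v) (hw : IsPOrthonormal π w)
    {a : Fin n → ℝ} (hle : ∀ f, spectralForm π a v f f ≤ spectralForm π a w f f)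
    (f g : Fin n → ℝ) : spectralForm π a v f g = spectralForm π a w f g := by
  set D : (Fin n → ℝ) → (Fin n → ℝ) → ℝ := fun f g =>
    spectralForm π a w f g - spectralForm π a v f g
  have hdiag : ∀ i, D (w i) (w i) = 0 := fun i => by
    have htrace := (sum_spectralForm_basis hv hw a).trans (sum_spectralForm_basis hw hw a).symm
    exact sub_eq_zero.mpr
      ((sum_eq_sum_iff_of_le fun i _ => hle (w i)).mp htrace i (mem_univ i)).symm
  have hrow : ∀ i g, D (w i) g = 0 := by
    intro i g
    have hquad : ∀ t, 0 ≤ D g g * (t * t) + 2 * D (w i) g * t + 0 := fun t => by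
      have := sub_nonneg.mpr (hle (w i + t • g))
      simp only [spectralForm_add_smul_self] at this
      linear_combination this + hdiag i
    have := discrim_le_zero hquad
    rw [discrim] at this
    nlinarith [sq_nonneg (D (w i) g)]
  rw [← hw.sum_pInner_smul f, spectralForm_sum_smul_left, spectralForm_sum_smul_left]
  exact sum_congr rfl fun i _ => by rw [sub_eq_zero.mp (hrow i g)]

lemma spectralForm_eq_of_comp_eq {φ : ℝ → ℝ} (hφ : Function.Injective φ)
    (hv : IsPOrthonormal π v) (hw : IsPOrthonormal π w) {a : Fin n → ℝ}
    (h : ∀ f g, spectralForm π (φ ∘ a) v f g = spectralForm π (φ ∘ a) w f g)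
    (f g : Fin n → ℝ) : spectralForm π a v f g = spectralForm π a w f g := by
  have hbasis : ∀ i j, a j * pInner π (w i) (v j) = a i * pInner π (w i) (v j) := by
    intro i j
    have hij := h (w i) (v j)
    rw [spectralForm_basis_right hv, spectralForm_comm, spectralForm_basis_right hw,
      pInner_comm π (v j)] at hij
    rcases eq_or_ne (pInner π (w i) (v j)) 0 with h0 | h0
    · simp [h0]
    · rw [hφ (mul_right_cancel₀ h0 hij)]
  rw [← hw.sum_pInner_smul f, spectralForm_sum_smul_left, spectralForm_sum_smul_left]
  refine sum_congr rfl fun i _ => congrArg _ ?_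
  rw [← hv.sum_pInner_smul g, spectralForm_sum_smul_right, spectralForm_sum_smul_right]
  refine sum_congr rfl fun j _ => congrArg _ ?_
  rw [spectralForm_basis_right hv, spectralForm_comm, spectralForm_basis_right hw, hbasis,
    pInner_comm π (v j)]

end SpectralForm

section Eigenbasis

variable {π : Fin n → ℝ} {P : Matrix (Fin n) (Fin n) ℝ} {v : Fin n → Fin n → ℝ}
  {lam : Fin n → ℝ}

lemma pow_mulVec_of_mulVec_eq_smul {u : Fin n → ℝ} {l : ℝ} (hu : P *ᵥ u = l • u) (k : ℕ) :
    (P ^ k) *ᵥ u = l ^ k • u := by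
  induction k with
  | zero => simp
  | succ k ih => rw [pow_succ', ← mulVec_mulVec, ih, mulVec_smul, hu, smul_smul, pow_succ]

lemma pInner_pow_mulVec (hv : IsPOrthonormal π v) (heig : ∀ i, P *ᵥ v i = lam i • v i)
    (k : ℕ) (f g : Fin n → ℝ) :
    pInner π f ((P ^ k) *ᵥ g) = spectralForm π (fun m => lam m ^ k) v f g := by
  conv_lhs => rw [← hv.sum_pInner_smul g]
  simp only [mulVec_sum, mulVec_smul, pow_mulVec_of_mulVec_eq_smul (heig _), smul_smul,
    pInner_sum_smul_right, spectralForm]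
  exact sum_congr rfl fun _ _ => by ring

lemma eq_of_spectralForm_eq {Q : Matrix (Fin n) (Fin n) ℝ} {w : Fin n → Fin n → ℝ}
    (hv : IsPOrthonormal π v) (hw : IsPOrthonormal π w)
    (hP : ∀ i, P *ᵥ v i = lam i • v i) (hQ : ∀ i, Q *ᵥ w i = lam i • w i)
    (h : ∀ f g, spectralForm π lam v f g = spectralForm π lam w f g) : P = Q := by
  refine ext_iff_mulVec.mpr fun g => hv.ext fun i => ?_
  have hPg := pInner_pow_mulVec hv hP 1 (v i) g
  have hQg := pInner_pow_mulVec hw hQ 1 (v i) g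
  simp only [pow_one] at hPg hQg
  rw [pInner_comm, hPg, pInner_comm, hQg, h]

end Eigenbasis

section MarkovChain

variable {π : Fin n → ℝ} {P : Matrix (Fin n) (Fin n) ℝ}

lemma IsStochastic.mulVec_one (hP : IsStochastic P) : P *ᵥ 1 = 1 := by
  ext x
  simp [mulVec, dotProduct, hP.2 x]

lemma IsStochastic.pow_apply_nonneg (hP : IsStochastic P) (k : ℕ) (x y : Fin n) :
    0 ≤ (P ^ k) x y := by
  induction k generalizing y with
  | zero => by_cases h : x = y <;> simp [one_apply, h]
  | succ k ih => rw [pow_succ, mul_apply]; exact sum_nonneg fun z _ => mul_nonneg (ih z) (hP.1 z y)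

lemma IsReversible.pInner_mulVec_comm (hrev : IsReversible π P) (f g : Fin n → ℝ) :
    pInner π (P *ᵥ f) g = pInner π f (P *ᵥ g) := by
  simp only [pInner, mulVec, dotProduct, sum_mul, mul_sum]
  rw [sum_comm]
  exact sum_congr rfl fun x _ => sum_congr rfl fun y _ => by
    linear_combination (f x * g y) * hrev y x

lemma IsReversible.sum_mul_apply (hrev : IsReversible π P) (hP : IsStochastic P) (y : Fin n) :
    ∑ x, π x * P x y = π y := by
  simp only [hrev _ y, ← mul_sum, hP.2 y, mul_one]

lemma pInner_mulVec_self_le (hπ : ∀ x, 0 < π x) (hP : IsStochastic P)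
    (hrev : IsReversible π P) (f : Fin n → ℝ) :
    pInner π (P *ᵥ f) (P *ᵥ f) ≤ pInner π f f := by
  have hjensen : ∀ x, (P *ᵥ f) x ^ 2 ≤ ∑ y, P x y * f y ^ 2 := fun x => by
    have := sum_sq_le_sum_mul_sum_of_sq_le_mul univ (r := fun y => P x y * f y)
      (fun y _ => hP.1 x y) (fun y _ => mul_nonneg (hP.1 x y) (sq_nonneg (f y)))
      (fun y _ => le_of_eq (by ring))
    rwa [hP.2 x, one_mul] at this
  calc pInner π (P *ᵥ f) (P *ᵥ f) = ∑ x, (P *ᵥ f) x ^ 2 * π x :=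
        sum_congr rfl fun _ _ => by ring
    _ ≤ ∑ x, (∑ y, P x y * f y ^ 2) * π x :=
        sum_le_sum fun x _ => mul_le_mul_of_nonneg_right (hjensen x) (hπ x).le
    _ = ∑ y, f y ^ 2 * ∑ x, π x * P x y := by
        simp only [sum_mul, mul_sum]
        exact sum_comm.trans (sum_congr rfl fun _ _ => sum_congr rfl fun _ _ => by ring)
    _ = pInner π f f := by
        simp only [hrev.sum_mul_apply hP, pInner]
        exact sum_congr rfl fun _ _ => by ring

lemma abs_le_one_of_mulVec_eq_smul_s15 (hπ : ∀ x, 0 < π x) (hP : IsStochastic P)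
    (hrev : IsReversible π P) {u : Fin n → ℝ} {l : ℝ} (hu : P *ᵥ u = l • u)
    (hnorm : pInner π u u = 1) : |l| ≤ 1 := by
  have h := pInner_mulVec_self_le hπ hP hrev u
  rw [hu, pInner_smul_left, pInner_comm, pInner_smul_left, hnorm] at h
  rw [← sq_le_one_iff_abs_le_one]
  linarith

lemma pInner_one_eq_zero_of_mulVec_eq_smul (hP : IsStochastic P) (hrev : IsReversible π P)
    {u : Fin n → ℝ} {l : ℝ} (hu : P *ᵥ u = l • u) (hl : l ≠ 1) : pInner π 1 u = 0 := by
  have h := hrev.pInner_mulVec_comm 1 u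
  rw [hP.mulVec_one, hu, pInner_comm π 1 (l • u), pInner_smul_left, pInner_comm π u 1] at h
  have : (1 - l) * pInner π 1 u = 0 := by linarith
  exact (mul_eq_zero.mp this).resolve_left (sub_ne_zero.mpr hl.symm)

lemma mem_of_pow_apply_pos {S : Set (Fin n)} (hS : ∀ z ∈ S, ∀ w, 0 < P z w → w ∈ S)
    (hP : IsStochastic P) {x : Fin n} (hx : x ∈ S) (k : ℕ) {z : Fin n} (hz : 0 < (P ^ k) x z) :
    z ∈ S := by
  induction k generalizing z with
  | zero =>
    rcases eq_or_ne x z with rfl | h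
    · exact hx
    · simp [one_apply, h] at hz
  | succ k ih =>
    rw [pow_succ, mul_apply] at hz
    obtain ⟨w, -, hw⟩ := exists_lt_of_sum_lt (f := fun _ => (0 : ℝ)) (by simpa using hz)
    have hxw := hP.pow_apply_nonneg k x w
    have hwz := hP.1 w z
    exact hS w (ih (pos_of_mul_pos_left hw hwz)) z (pos_of_mul_pos_right hw hxw)

lemma eq_of_mulVec_eq_self_s15 (hP : IsStochastic P) (hirr : MatIrreducible P) {f : Fin n → ℝ}
    (hf : P *ᵥ f = f) (x y : Fin n) : f x = f y := by
  obtain ⟨x₀, -, hmax⟩ := exists_max_image univ f ⟨x, mem_univ x⟩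
  -- `f` is a `P`-average of values `≤ f x₀`, so its maximisers are closed under transitions
  have hS : ∀ z ∈ {z | f z = f x₀}, ∀ w, 0 < P z w → w ∈ {z | f z = f x₀} := by
    intro z hz w hw
    have hsum : ∑ w, P z w * (f x₀ - f w) = 0 := by
      have hz' : ∑ w, P z w * f w = f z := congrFun hf z
      simp only [mul_sub, sum_sub_distrib, ← sum_mul, hP.2 z, one_mul, hz']
      exact sub_eq_zero.mpr hz.symm
    have hterm := (sum_eq_zero_iff_of_nonneg fun w _ =>
      mul_nonneg (hP.1 z w) (sub_nonneg.mpr (hmax w (mem_univ w)))).mp hsum w (mem_univ w)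
    exact (sub_eq_zero.mp ((mul_eq_zero.mp hterm).resolve_left hw.ne')).symm
  have hconst : ∀ z, f z = f x₀ := fun z => by
    obtain ⟨k, hk⟩ := hirr x₀ z
    exact mem_of_pow_apply_pos hS hP rfl k hk
  rw [hconst x, hconst y]

end MarkovChain

section AsymptoticVariance

noncomputable def sumPowDist (l : ℝ) (N : ℕ) : ℝ :=
  ∑ i ∈ range N, ∑ j ∈ range N, l ^ (max i j - min i j)

noncomputable def varFactor (l : ℝ) : ℝ := (1 + l) / (1 - l)

lemma sumPowDist_succ (l : ℝ) (N : ℕ) :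
    sumPowDist l (N + 1) = sumPowDist l N + 2 * ∑ k ∈ range N, l ^ (k + 1) + 1 := by
  have hrow : ∑ j ∈ range N, l ^ (max N j - min N j) = ∑ k ∈ range N, l ^ (k + 1) := by
    rw [← sum_range_reflect]
    refine sum_congr rfl fun j hj => ?_
    have := mem_range.mp hj
    rw [max_eq_left (by omega), min_eq_right (by omega)]
    congr 1
    omega
  have hcol : ∑ i ∈ range N, l ^ (max i N - min i N) = ∑ k ∈ range N, l ^ (k + 1) := by
    simpa only [max_comm, min_comm] using hrow
  simp only [sumPowDist, sum_range_succ, sum_add_distrib, hrow, hcol, max_self, min_self,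
    Nat.sub_self, pow_zero]
  ring

lemma sumPowDist_eq (l : ℝ) (hl : l ≠ 1) (N : ℕ) :
    sumPowDist l N = N * varFactor l - 2 * l * (1 - l ^ N) / (1 - l) ^ 2 := by
  have h1l : 1 - l ≠ 0 := sub_ne_zero.mpr hl.symm
  induction N with
  | zero => simp [sumPowDist]
  | succ N ih =>
    have hgeom : ∑ k ∈ range N, l ^ (k + 1) = l * (1 - l ^ N) / (1 - l) := by
      have hl' : l - 1 ≠ 0 := sub_ne_zero.mpr hl
      simp only [pow_succ', ← mul_sum]
      rw [geom_sum_eq hl]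
      field_simp
      ring
    rw [sumPowDist_succ, ih, hgeom, varFactor]
    field_simp
    push_cast
    ring

lemma tendsto_sumPowDist_div {l : ℝ} (h₁ : -1 ≤ l) (h₂ : l < 1) :
    Tendsto (fun N : ℕ => (N : ℝ)⁻¹ * sumPowDist l N) atTop (nhds (varFactor l)) := by
  have hbdd : ∀ N : ℕ, ‖2 * l * (1 - l ^ N) / (1 - l) ^ 2‖ ≤ 4 / (1 - l) ^ 2 := fun N => by
    have hl : |l| ≤ 1 := abs_le.mpr ⟨h₁, h₂.le⟩
    have hlN : |1 - l ^ N| ≤ 2 := (abs_sub _ _).trans <| by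
      rw [abs_one, abs_pow]
      linarith [pow_le_one₀ (abs_nonneg l) hl (n := N)]
    rw [Real.norm_eq_abs, abs_div, abs_of_pos (by nlinarith : (0 : ℝ) < (1 - l) ^ 2), abs_mul,
      abs_mul, abs_two]
    gcongr
    calc 2 * |l| * |1 - l ^ N| ≤ 2 * 1 * 2 := by gcongr
      _ = 4 := by norm_num
  have hrest : Tendsto (fun N : ℕ => (N : ℝ)⁻¹ * (2 * l * (1 - l ^ N) / (1 - l) ^ 2)) atTop
      (nhds 0) :=
    tendsto_inv_atTop_nhds_zero_nat.zero_mul_isBoundedUnder_le (isBoundedUnder_of ⟨_, hbdd⟩)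
  have hlim := (tendsto_const_nhds (x := varFactor l)).sub hrest
  rw [sub_zero] at hlim
  refine hlim.congr' ?_
  filter_upwards [eventually_ne_atTop 0] with N hN
  rw [sumPowDist_eq l h₂.ne, mul_sub (N : ℝ)⁻¹, inv_mul_cancel_left₀ (Nat.cast_ne_zero.mpr hN)]

end AsymptoticVariance

section Centering

variable {π : Fin n → ℝ}

noncomputable def pMean (π f : Fin n → ℝ) : ℝ := ∑ z, π z * f z

noncomputable def center (π f : Fin n → ℝ) : Fin n → ℝ := fun x => f x - pMean π f

lemma pInner_center_left (f u : Fin n → ℝ) :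
    pInner π (center π f) u = pInner π f u - pMean π f * pInner π 1 u := by
  simp only [pInner, center, Pi.one_apply, mul_sum, ← sum_sub_distrib]
  exact sum_congr rfl fun _ _ => by ring

lemma pInner_one_one (hπ : ∑ x, π x = 1) : pInner π 1 1 = 1 := by
  simpa [pInner] using hπ

lemma pInner_center_const (hπ : ∑ x, π x = 1) (f : Fin n → ℝ) (c : ℝ) :
    pInner π (center π f) (fun _ => c) = 0 := by
  have hconst : ∀ g : Fin n → ℝ, pInner π g (fun _ => c) = c * pMean π g := fun g => by
    simp only [pInner, pMean, mul_sum]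
    exact sum_congr rfl fun _ _ => by ring
  have hmean : pMean π 1 = 1 := by simpa [pMean] using hπ
  rw [pInner_center_left, hconst, hconst, hmean]
  ring

end Centering

section Variance

variable {π : Fin n → ℝ} {P : Matrix (Fin n) (Fin n) ℝ} {v : Fin n → Fin n → ℝ}
  {lam : Fin n → ℝ}

lemma autocov_eq_spectralForm (hv : IsPOrthonormal π v) (heig : ∀ i, P *ᵥ v i = lam i • v i)
    (f : Fin n → ℝ) (k : ℕ) :
    autocov π P f k = spectralForm π (fun m => lam m ^ k) v (center π f) (center π f) := by
  rw [← pInner_pow_mulVec hv heig]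
  simp only [autocov, pInner, mulVec, dotProduct, center, pMean]
  refine sum_congr rfl fun x _ => ?_
  rw [mul_sum, sum_mul]
  exact sum_congr rfl fun _ _ => by ring

lemma varN_eq_sum (hv : IsPOrthonormal π v) (heig : ∀ i, P *ᵥ v i = lam i • v i)
    (f : Fin n → ℝ) (N : ℕ) :
    varN π P f N = ∑ m, pInner π (center π f) (v m) ^ 2 * ((N : ℝ)⁻¹ * sumPowDist (lam m) N) := by
  simp only [varN, autocov_eq_spectralForm hv heig, spectralForm, sumPowDist, mul_sum]
  rw [eq_comm, sum_comm]
  refine sum_congr rfl fun i _ => ?_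
  rw [sum_comm]
  exact sum_congr rfl fun j _ => sum_congr rfl fun m _ => by ring

lemma hasAsymptVar_of_eigenbasis (hv : IsPOrthonormal π v)
    (heig : ∀ i, P *ᵥ v i = lam i • v i) (hlam : ∀ m, |lam m| ≤ 1) (f : Fin n → ℝ)
    (hf : ∀ m, lam m = 1 → pInner π (center π f) (v m) = 0) :
    HasAsymptVar π P f (∑ m, pInner π (center π f) (v m) ^ 2 * varFactor (lam m)) := by
  rw [HasAsymptVar, funext (varN_eq_sum hv heig f)]
  refine tendsto_finsetSum _ fun m _ => ?_
  rcases (abs_le.mp (hlam m)).2.lt_or_eq with hlt | heq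
  · exact (tendsto_sumPowDist_div (abs_le.mp (hlam m)).1 hlt).const_mul _
  · simp [hf m heq]

end Variance

section EfficiencyDominance

-- The Möbius map `varFactor` sends `∞` to `-1`; giving `1` that value makes it injective.
noncomputable def varFactorExt (l : ℝ) : ℝ := if l = 1 then -1 else varFactor l

lemma varFactorExt_injective : Function.Injective varFactorExt := by
  intro a b h
  have hne : ∀ c : ℝ, c ≠ 1 → -1 ≠ varFactor c := fun c hc hc' => by
    rw [varFactor, eq_div_iff (sub_ne_zero.mpr hc.symm)] at hc'
    linarith
  unfold varFactorExt at h
  split_ifs at h with ha hb hb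
  · rw [ha, hb]
  · exact absurd h (hne b hb)
  · exact absurd h.symm (hne a ha)
  · rw [varFactor, varFactor, div_eq_div_iff (sub_ne_zero.mpr (Ne.symm ha))
      (sub_ne_zero.mpr (Ne.symm hb))] at h
    linarith

variable {π : Fin n → ℝ} {P Q : Matrix (Fin n) (Fin n) ℝ} {v w : Fin n → Fin n → ℝ}
  {lam : Fin n → ℝ}

lemma pInner_center_eq_zero_of_mulVec_eq_self (hπ : ∑ x, π x = 1) (hP : IsStochastic P)
    (hirr : MatIrreducible P) {u : Fin n → ℝ} (hu : P *ᵥ u = u) (f : Fin n → ℝ) :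
    pInner π (center π f) u = 0 := by
  rcases isEmpty_or_nonempty (Fin n) with _ | ⟨⟨x₀⟩⟩
  · simp [pInner]
  · rw [show u = fun _ => u x₀ from funext fun x => eq_of_mulVec_eq_self_s15 hP hirr hu x x₀]
    exact pInner_center_const hπ f _

lemma hasAsymptVar_of_isReversible (hπpos : ∀ x, 0 < π x) (hπsum : ∑ x, π x = 1)
    (hP : IsStochastic P) (hirr : MatIrreducible P) (hrev : IsReversible π P)
    (hv : IsPOrthonormal π v) (heig : ∀ i, P *ᵥ v i = lam i • v i) (f : Fin n → ℝ) :
    HasAsymptVar π P f (∑ m, pInner π (center π f) (v m) ^ 2 * varFactor (lam m)) := by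
  refine hasAsymptVar_of_eigenbasis hv heig (fun m => ?_) f (fun m hm => ?_)
  · exact abs_le_one_of_mulVec_eq_smul_s15 hπpos hP hrev (heig m) (by simpa using hv m m)
  · exact pInner_center_eq_zero_of_mulVec_eq_self hπsum hP hirr (by rw [heig m, hm, one_smul]) f

lemma spectralForm_varFactorExt_self (hπsum : ∑ x, π x = 1) (hP : IsStochastic P)
    (hirr : MatIrreducible P) (hrev : IsReversible π P) (hv : IsPOrthonormal π v)
    (heig : ∀ i, P *ᵥ v i = lam i • v i) (f : Fin n → ℝ) :
    spectralForm π (varFactorExt ∘ lam) v f f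
      = ∑ m, pInner π (center π f) (v m) ^ 2 * varFactor (lam m) - pMean π f ^ 2 := by
  have hterm : ∀ m, varFactorExt (lam m) * (pInner π f (v m) * pInner π f (v m))
      = pInner π (center π f) (v m) ^ 2 * varFactor (lam m)
        - pMean π f ^ 2 * pInner π 1 (v m) ^ 2 := fun m => by
    have hsplit : pInner π f (v m)
        = pInner π (center π f) (v m) + pMean π f * pInner π 1 (v m) := by
      rw [pInner_center_left]
      ring
    rw [hsplit]
    by_cases hm : lam m = 1
    · rw [pInner_center_eq_zero_of_mulVec_eq_self hπsum hP hirr (by rw [heig m, hm, one_smul])]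
      simp only [varFactorExt, hm, if_true]
      ring
    · rw [pInner_one_eq_zero_of_mulVec_eq_smul hP hrev (heig m) hm]
      simp only [varFactorExt, hm, if_false]
      ring
  simp only [spectralForm, Function.comp_apply, hterm, sum_sub_distrib, ← mul_sum,
    hv.sum_pInner_sq, pInner_one_one hπsum, mul_one]

lemma spectralForm_varFactorExt_le_of_effDom (hπpos : ∀ x, 0 < π x) (hπsum : ∑ x, π x = 1)
    (hP : IsStochastic P) (hQ : IsStochastic Q) (hirrP : MatIrreducible P)
    (hirrQ : MatIrreducible Q) (hrevP : IsReversible π P) (hrevQ : IsReversible π Q)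
    (hv : IsPOrthonormal π v) (hw : IsPOrthonormal π w) (hPv : ∀ i, P *ᵥ v i = lam i • v i)
    (hQw : ∀ i, Q *ᵥ w i = lam i • w i) (hdom : EffDom π P Q) (f : Fin n → ℝ) :
    spectralForm π (varFactorExt ∘ lam) v f f ≤ spectralForm π (varFactorExt ∘ lam) w f f := by
  rw [spectralForm_varFactorExt_self hπsum hP hirrP hrevP hv hPv,
    spectralForm_varFactorExt_self hπsum hQ hirrQ hrevQ hw hQw]
  exact sub_le_sub_right (hdom f _ _
    (hasAsymptVar_of_isReversible hπpos hπsum hP hirrP hrevP hv hPv f)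
    (hasAsymptVar_of_isReversible hπpos hπsum hQ hirrQ hrevQ hw hQw f)) _

theorem eq_of_effDom (hπpos : ∀ x, 0 < π x) (hπsum : ∑ x, π x = 1)
    (hP : IsStochastic P) (hQ : IsStochastic Q) (hirrP : MatIrreducible P)
    (hirrQ : MatIrreducible Q) (hrevP : IsReversible π P) (hrevQ : IsReversible π Q)
    (hv : IsPOrthonormal π v) (hw : IsPOrthonormal π w) (hPv : ∀ i, P *ᵥ v i = lam i • v i)
    (hQw : ∀ i, Q *ᵥ w i = lam i • w i) (hdom : EffDom π P Q) : P = Q :=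
  eq_of_spectralForm_eq hv hw hPv hQw <|
    spectralForm_eq_of_comp_eq varFactorExt_injective hv hw <|
      spectralForm_eq_of_forall_le hv hw <|
        spectralForm_varFactorExt_le_of_effDom hπpos hπsum hP hQ hirrP hirrQ hrevP hrevQ hv hw
          hPv hQw hdom

end EfficiencyDominance

end

theorem stmt15 {n : ℕ} (π : Fin n → ℝ) (P Q : Matrix (Fin n) (Fin n) ℝ)
    (hπpos : ∀ x, 0 < π x) (hπsum : ∑ x, π x = 1)
    (hP : IsStochastic P) (hQ : IsStochastic Q)
    (hirrP : MatIrreducible P) (hirrQ : MatIrreducible Q)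
    (hrevP : IsReversible π P) (hrevQ : IsReversible π Q)
    (vP vQ : Fin n → Fin n → ℝ) (lam : Fin n → ℝ)
    (horthoP : ∀ i j, pInner π (vP i) (vP j) = if i = j then 1 else 0)
    (horthoQ : ∀ i j, pInner π (vQ i) (vQ j) = if i = j then 1 else 0)
    (heigP : ∀ i, P.mulVec (vP i) = lam i • vP i)
    (heigQ : ∀ i, Q.mulVec (vQ i) = lam i • vQ i)
    (hne : P ≠ Q) :
    ¬ EffDom π P Q ∧ ¬ EffDom π Q P :=
  ⟨fun h => hne (eq_of_effDom hπpos hπsum hP hQ hirrP hirrQ hrevP hrevQ horthoP horthoQ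
      heigP heigQ h),
    fun h => hne (eq_of_effDom hπpos hπsum hQ hP hirrQ hirrP hrevQ hrevP horthoQ horthoP
      heigQ heigP h).symm⟩
end

section
/- For any transition matrix P on a finite state space S for which π is a stationary distribution, trace(P) ≥ max(0, (2π_max − 1)/π_max), where π_max = max_x π(x). Moreover, if trace(P) attains this minimum, then P has at most one non-zero diagonal entry, and any such entry is at a state x* with π(x*) = π_max > 1/2. -/
open Matrix BigOperators Filter

/-!
Stationarity at a state `x` reads `π x = ∑ y, π y * P y x`; the terms with `y ≠ x` carry
at most the mass `1 - π x`, so `2 * π x - 1 ≤ π x * P x x`. At a state where `π` is maximal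
this bounds one diagonal entry, hence the trace, from below. If the trace equals the bound,
that single entry already exhausts it, so every other diagonal entry vanishes, and a non-zero
entry makes the bound positive, i.e. `π_max > 1/2`.
-/

open Finset

namespace Matrix

variable {ι : Type*} [Fintype ι] {A : Matrix ι ι ℝ}

lemma diag_le_trace_of_nonneg (h0 : ∀ i, 0 ≤ A i i) (i : ι) : A i i ≤ A.trace :=
  single_le_sum (f := fun j => A j j) (fun j _ => h0 j) (mem_univ i)

lemma diag_eq_zero_of_trace_le_diag [DecidableEq ι] (h0 : ∀ i, 0 ≤ A i i) {i j : ι}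
    (hji : j ≠ i) (h : A.trace ≤ A i i) : A j j = 0 := by
  have hsplit : A.trace = A i i + ∑ k ∈ univ.erase i, A k k :=
    (add_sum_erase _ (fun k => A k k) (mem_univ i)).symm
  have hrest : ∑ k ∈ univ.erase i, A k k = 0 :=
    le_antisymm (by linarith) (sum_nonneg fun k _ => h0 k)
  exact (sum_eq_zero_iff_of_nonneg fun k _ => h0 k).1 hrest j (mem_erase.2 ⟨hji, mem_univ j⟩)

end Matrix

namespace IsStochastic

variable {n : ℕ} {P : Matrix (Fin n) (Fin n) ℝ}

lemma le_one (hP : IsStochastic P) (x y : Fin n) : P x y ≤ 1 :=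
  hP.2 x ▸ single_le_sum (fun z _ => hP.1 x z) (mem_univ y)

lemma two_mul_sub_one_le_mul_diag (hP : IsStochastic P) {π : Fin n → ℝ}
    (hπ : ∀ x, 0 ≤ π x) (hπsum : ∑ x, π x = 1) (hstat : ∀ y, ∑ x, π x * P x y = π y)
    (x : Fin n) : 2 * π x - 1 ≤ π x * P x x := by
  have hinflow : π x ≤ π x * P x x + (1 - π x) :=
    calc π x = ∑ y, π y * P y x := (hstat x).symm
      _ = π x * P x x + ∑ y ∈ univ.erase x, π y * P y x :=
        (add_sum_erase _ (fun y => π y * P y x) (mem_univ x)).symm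
      _ ≤ π x * P x x + ∑ y ∈ univ.erase x, π y := by
        gcongr with y
        exact mul_le_of_le_one_right (hπ y) (hP.le_one y x)
      _ = π x * P x x + (1 - π x) := by rw [sum_erase_eq_sub (mem_univ x), hπsum]
  linarith

lemma two_mul_sub_one_div_le_diag (hP : IsStochastic P) {π : Fin n → ℝ}
    (hπpos : ∀ x, 0 < π x) (hπsum : ∑ x, π x = 1) (hstat : ∀ y, ∑ x, π x * P x y = π y)
    (x : Fin n) : (2 * π x - 1) / π x ≤ P x x := by
  rw [div_le_iff₀ (hπpos x), mul_comm (P x x)]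
  exact hP.two_mul_sub_one_le_mul_diag (fun y => (hπpos y).le) hπsum hstat x

end IsStochastic

theorem stmt16 {n : ℕ} (π : Fin n → ℝ) (P : Matrix (Fin n) (Fin n) ℝ)
    (hπpos : ∀ x, 0 < π x) (hπsum : ∑ x, π x = 1)
    (hP : IsStochastic P)
    (hstat : ∀ y, ∑ x, π x * P x y = π y)
    (pm : ℝ) (hpm : IsGreatest (Set.range π) pm) :
    max 0 ((2 * pm - 1) / pm) ≤ P.trace ∧
    (P.trace = max 0 ((2 * pm - 1) / pm) →
      (∀ x y, P x x ≠ 0 → P y y ≠ 0 → x = y) ∧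
      ∀ x, P x x ≠ 0 → π x = pm ∧ 1 / 2 < pm) := by
  obtain ⟨⟨x₀, rfl⟩, -⟩ := hpm
  have hdiag : ∀ x, 0 ≤ P x x := fun x => hP.1 x x
  have hbound : max 0 ((2 * π x₀ - 1) / π x₀) ≤ P x₀ x₀ :=
    max_le (hdiag x₀) (hP.two_mul_sub_one_div_le_diag hπpos hπsum hstat x₀)
  refine ⟨hbound.trans (Matrix.diag_le_trace_of_nonneg hdiag x₀), fun heq => ?_⟩
  have hsupport : ∀ x, P x x ≠ 0 → x = x₀ := fun x hx =>
    by_contra fun hne => hx (Matrix.diag_eq_zero_of_trace_le_diag hdiag hne (heq ▸ hbound))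
  refine ⟨fun x y hx hy => (hsupport x hx).trans (hsupport y hy).symm, fun x hx => ?_⟩
  obtain rfl := hsupport x hx
  have htrace_pos : 0 < P.trace :=
    ((hdiag x).lt_of_ne (Ne.symm hx)).trans_le (Matrix.diag_le_trace_of_nonneg hdiag x)
  rw [heq, lt_max_iff, lt_self_iff_false, false_or,
    div_pos_iff_of_pos_right (hπpos x)] at htrace_pos
  exact ⟨rfl, by linarith⟩
end
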